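/- Let p ≥ 2 be a natural number, ε > 0, and α ∈ (0,1). Define h(t,x) = 1 - (2ε)^{p-1}·(p-1)·t·(log(6/(x-t)))^{α(p-1)} and θ(t,x) = 2ε·(log(6/(x-t)))^α · h(t,x)^{-1/(p-1)} on the open set D = {(t,x) ∈ ℝ² : t > 0, 0 < x - t < 2, h(t,x) > 0}. Then θ is continuously differentiable on D, satisfies (∂_t θ + ∂_x θ)(t,x) = θ(t,x)^p for all (t,x) ∈ D, and θ(t,x) → 2ε·(log(6/x₀))^α as (t,x) → (0,x₀) for each x₀ ∈ (0,2). -/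

import Mathlib

open Set Filter

/-! The quantity `x - t` is constant along the characteristic `s ↦ (t + s, x + s)`, and on it
`h = 1 - (p - 1) A^{p-1} t` with `A = 2ε (log (6/(x-t)))^α`. So `θ` restricted to a characteristic
is `s ↦ A (1 - (p-1) A^{p-1} s)^{-1/(p-1)}`, the explicit solution of `w' = w^p` with `w(0) = A`,
and the transport equation is this ODE read along characteristics. -/

noncomputable section

def powODESolution (p : ℕ) (A s : ℝ) : ℝ :=
  A * (1 - ((p : ℝ) - 1) * A ^ (p - 1) * s) ^ (-(1 / ((p : ℝ) - 1)))

theorem hasDerivAt_powODESolution {p : ℕ} (hp : 1 < p) (A : ℝ) {s : ℝ}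
    (hs : 0 < 1 - ((p : ℝ) - 1) * A ^ (p - 1) * s) :
    HasDerivAt (powODESolution p A) (powODESolution p A s ^ p) s := by
  have hp1 : (0 : ℝ) < p - 1 := by
    rw [sub_pos]; exact_mod_cast hp
  have hu : HasDerivAt (fun s => 1 - ((p : ℝ) - 1) * A ^ (p - 1) * s)
      (-(((p : ℝ) - 1) * A ^ (p - 1))) s := by
    simpa using ((hasDerivAt_id s).const_mul (((p : ℝ) - 1) * A ^ (p - 1))).const_sub 1
  refine ((hu.rpow_const (p := -(1 / ((p : ℝ) - 1))) (Or.inl hs.ne')).const_mul A).congr_deriv ?_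
  have hr : -(1 / ((p : ℝ) - 1)) - 1 = -(1 / ((p : ℝ) - 1)) * p := by field_simp; ring
  have hA : A * A ^ (p - 1) = A ^ p := by rw [← pow_succ']; congr 1; omega
  rw [powODESolution, hr, Real.rpow_mul_natCast hs.le, mul_pow, ← hA]
  field_simp

def initialDatum (ε α y : ℝ) : ℝ := 2 * ε * Real.log (6 / y) ^ α

theorem log_six_div_pos {y : ℝ} (hy : y ∈ Ioo 0 6) : 0 < Real.log (6 / y) :=
  Real.log_pos <| (one_lt_div hy.1).2 hy.2

-- For a negative base `Real.rpow` violates `(x ^ a) ^ n = x ^ (a * n)`; hence `y < 6`.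
theorem initialDatum_pow (ε α : ℝ) {y : ℝ} (hy : y ∈ Ioo 0 6) (n : ℕ) :
    initialDatum ε α y ^ n = (2 * ε) ^ n * Real.log (6 / y) ^ (α * n) := by
  rw [initialDatum, mul_pow, Real.rpow_mul_natCast (log_six_div_pos hy).le]

def blowupFactor (p : ℕ) (ε α : ℝ) (q : ℝ × ℝ) : ℝ :=
  1 - (2 * ε) ^ (p - 1) * ((p : ℝ) - 1) * q.1
    * Real.log (6 / (q.2 - q.1)) ^ (α * ((p : ℝ) - 1))

def blowupSolution (p : ℕ) (ε α : ℝ) (q : ℝ × ℝ) : ℝ :=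
  initialDatum ε α (q.2 - q.1) * blowupFactor p ε α q ^ (-(1 / ((p : ℝ) - 1)))

theorem blowupFactor_eq {p : ℕ} (hp : 1 ≤ p) (ε α : ℝ) {q : ℝ × ℝ}
    (hq : q.2 - q.1 ∈ Ioo 0 6) :
    blowupFactor p ε α q = 1 - ((p : ℝ) - 1) * initialDatum ε α (q.2 - q.1) ^ (p - 1) * q.1 := by
  rw [blowupFactor, initialDatum_pow ε α hq, Nat.cast_sub hp, Nat.cast_one]
  ring

theorem blowupSolution_eq {p : ℕ} (hp : 1 ≤ p) (ε α : ℝ) {q : ℝ × ℝ}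
    (hq : q.2 - q.1 ∈ Ioo 0 6) :
    blowupSolution p ε α q = powODESolution p (initialDatum ε α (q.2 - q.1)) q.1 := by
  rw [blowupSolution, blowupFactor_eq hp ε α hq, powODESolution]

theorem blowupSolution_zero_left (p : ℕ) (ε α x : ℝ) :
    blowupSolution p ε α (0, x) = initialDatum ε α x := by
  simp [blowupSolution, blowupFactor]

theorem contDiffAt_blowupSolution (p : ℕ) (ε α : ℝ) {n : WithTop ℕ∞} {q : ℝ × ℝ}
    (hq : q.2 - q.1 ∈ Ioo 0 6) (hpos : 0 < blowupFactor p ε α q) :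
    ContDiffAt ℝ n (blowupSolution p ε α) q := by
  have hlog : ContDiffAt ℝ n (fun w : ℝ × ℝ => Real.log (6 / (w.2 - w.1))) q :=
    (contDiffAt_const.div (contDiffAt_snd.sub contDiffAt_fst) hq.1.ne').log
      (div_pos (by norm_num) hq.1).ne'
  have hlogα (β : ℝ) : ContDiffAt ℝ n (fun w : ℝ × ℝ => Real.log (6 / (w.2 - w.1)) ^ β) q :=
    hlog.rpow_const_of_ne (log_six_div_pos hq).ne'
  have hfactor : ContDiffAt ℝ n (blowupFactor p ε α) q :=
    contDiffAt_const.sub ((contDiffAt_const.mul contDiffAt_fst).mul (hlogα _))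
  exact (contDiffAt_const.mul (hlogα α)).mul (hfactor.rpow_const_of_ne hpos.ne')

theorem hasLineDerivAt_blowupSolution {p : ℕ} (hp : 1 < p) (ε α : ℝ) {q : ℝ × ℝ}
    (hq : q.2 - q.1 ∈ Ioo 0 6) (hpos : 0 < blowupFactor p ε α q) :
    HasLineDerivAt ℝ (blowupSolution p ε α) (blowupSolution p ε α q ^ p) q (1, 1) := by
  have hline (s : ℝ) : blowupSolution p ε α (q + s • (1, 1)) =
      powODESolution p (initialDatum ε α (q.2 - q.1)) (q.1 + s) := by
    have hq' : (q + s • (1, 1)).2 - (q + s • (1, 1)).1 = q.2 - q.1 := by simp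
    rw [blowupSolution_eq hp.le ε α (hq'.symm ▸ hq), hq']
    simp
  rw [blowupFactor_eq hp.le ε α hq] at hpos
  rw [HasLineDerivAt, funext hline, blowupSolution_eq hp.le ε α hq]
  simpa using (hasDerivAt_powODESolution hp _ (by rwa [add_zero])).comp_const_add q.1 0

end

theorem explicit_transport_blowup_solution_general
    (p : ℕ) (hp : 2 ≤ p) (ε α : ℝ)
    (h θ : ℝ × ℝ → ℝ)
    (hh : ∀ q : ℝ × ℝ, h q =
      1 - (2 * ε) ^ (p - 1) * ((p : ℝ) - 1) * q.1
        * Real.log (6 / (q.2 - q.1)) ^ (α * ((p : ℝ) - 1)))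
    (hθ : ∀ q : ℝ × ℝ, θ q =
      2 * ε * Real.log (6 / (q.2 - q.1)) ^ α * h q ^ (-(1 / ((p : ℝ) - 1))))
    (D : Set (ℝ × ℝ))
    (hD : D = {q : ℝ × ℝ | 0 < q.1 ∧ q.2 - q.1 ∈ Set.Ioo (0 : ℝ) 2 ∧ 0 < h q}) :
    ContDiffOn ℝ 1 θ D ∧
    (∀ q ∈ D, fderiv ℝ θ q (1, 1) = θ q ^ p) ∧
    (∀ x₀ ∈ Set.Ioo (0 : ℝ) 2,
      Filter.Tendsto θ (nhdsWithin ((0 : ℝ), x₀) D)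
        (nhds (2 * ε * Real.log (6 / x₀) ^ α))) := by
  obtain rfl : h = blowupFactor p ε α := funext hh
  obtain rfl : θ = blowupSolution p ε α := funext hθ
  subst hD
  have hstrip {q : ℝ × ℝ} (hq : q.2 - q.1 ∈ Ioo 0 2) : q.2 - q.1 ∈ Ioo 0 6 :=
    Ioo_subset_Ioo_right (by norm_num) hq
  refine ⟨fun q ⟨_, hq, hpos⟩ => ?_, fun q ⟨_, hq, hpos⟩ => ?_, fun x₀ hx₀ => ?_⟩
  · exact (contDiffAt_blowupSolution p ε α (hstrip hq) hpos).contDiffWithinAt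
  · have hdiff : DifferentiableAt ℝ (blowupSolution p ε α) q :=
      (contDiffAt_blowupSolution p ε α (n := 1) (hstrip hq) hpos).differentiableAt one_ne_zero
    exact (hdiff.hasFDerivAt.hasLineDerivAt (1, 1)).unique
      (hasLineDerivAt_blowupSolution hp ε α (hstrip hq) hpos)
  · have hpos : 0 < blowupFactor p ε α (0, x₀) := by simp [blowupFactor]
    have hcont := (contDiffAt_blowupSolution p ε α (n := 0)
      (hstrip (by simpa using hx₀)) hpos).continuousAt
    rw [ContinuousAt, blowupSolution_zero_left] at hcont
    exact hcont.mono_left nhdsWithin_le_nhds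

/-- The explicit solution `θ(t,x) = 2ε (log (6/(x-t)))^α h(t,x)^{-1/(p-1)}`, with
`h(t,x) = 1 - (2ε)^{p-1}(p-1) t (log (6/(x-t)))^{α(p-1)}`, is `C¹` on
`D = {(t,x) : t > 0, 0 < x - t < 2, h(t,x) > 0}`, satisfies the transport equation
`∂_t θ + ∂_x θ = θ^p` on `D`, and attains the initial values `2ε (log (6/x₀))^α`
as `(t,x) → (0,x₀)` for `x₀ ∈ (0,2)`. -/
theorem explicit_transport_blowup_solution
    (p : ℕ) (hp : 2 ≤ p) (ε α : ℝ) (hε : 0 < ε) (hα : α ∈ Set.Ioo (0 : ℝ) 1)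
    (h θ : ℝ × ℝ → ℝ)
    (hh : ∀ q : ℝ × ℝ, h q =
      1 - (2 * ε) ^ (p - 1) * ((p : ℝ) - 1) * q.1
        * Real.log (6 / (q.2 - q.1)) ^ (α * ((p : ℝ) - 1)))
    (hθ : ∀ q : ℝ × ℝ, θ q =
      2 * ε * Real.log (6 / (q.2 - q.1)) ^ α * h q ^ (-(1 / ((p : ℝ) - 1))))
    (D : Set (ℝ × ℝ))
    (hD : D = {q : ℝ × ℝ | 0 < q.1 ∧ q.2 - q.1 ∈ Set.Ioo (0 : ℝ) 2 ∧ 0 < h q}) :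
    ContDiffOn ℝ 1 θ D ∧
    (∀ q ∈ D, fderiv ℝ θ q (1, 1) = θ q ^ p) ∧
    (∀ x₀ ∈ Set.Ioo (0 : ℝ) 2,
      Filter.Tendsto θ (nhdsWithin ((0 : ℝ), x₀) D)
        (nhds (2 * ε * Real.log (6 / x₀) ^ α))) :=
  explicit_transport_blowup_solution_general p hp ε α h θ hh hθ D hD
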